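/- Let M be a real m×n matrix and μ > 0. Set Γ* = (M Mᵀ + μ·I)^{1/2}. Then Γ* is positive definite, and for every m×m real positive definite matrix Γ one has tr(Mᵀ Γ⁻¹ M) + μ·tr(Γ⁻¹) + tr(Γ) ≥ tr(Mᵀ (Γ*)⁻¹ M) + μ·tr((Γ*)⁻¹) + tr(Γ*) = 2 tr((M Mᵀ + μ·I)^{1/2}). -/

import Mathlib

open Matrix

theorem posSemidef_self_mul_transpose {m n : ℕ} (M : Matrix (Fin m) (Fin n) ℝ) :
    (M * Mᵀ).PosSemidef := by
  simpa [Matrix.conjTranspose_eq_transpose_of_trivial] using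
    Matrix.posSemidef_self_mul_conjTranspose M

theorem posSemidef_self_mul_transpose_add_smul_one {m n : ℕ}
    (M : Matrix (Fin m) (Fin n) ℝ) {μ : ℝ} (hμ : 0 < μ) :
    (M * Mᵀ + μ • (1 : Matrix (Fin m) (Fin m) ℝ)).PosSemidef := by
  refine (posSemidef_self_mul_transpose M).add ?_
  rw [Matrix.smul_one_eq_diagonal]
  exact Matrix.posSemidef_diagonal_iff.mpr fun _ => le_of_lt hμ

/-- The square root of a positive semidefinite matrix, as defined in the older Mathlib
(`Matrix.PosSemidef.sqrt`, removed since). -/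
noncomputable def Matrix.PosSemidef.sqrt {n : Type*} [Fintype n] [DecidableEq n] {A : Matrix n n ℝ}
    (hA : A.PosSemidef) : Matrix n n ℝ :=
  hA.1.eigenvectorUnitary.1 * diagonal ((↑) ∘ (√·) ∘ hA.1.eigenvalues) *
    (star hA.1.eigenvectorUnitary : Matrix n n ℝ)

/-!
Writing `A = M Mᵀ + μ I = S²` with `S = A ^ (1/2)`, the objective at `Γ` is
`tr (Γ⁻¹ A) + tr Γ = tr (S Γ⁻¹ S) + tr Γ`, and
`tr (S Γ⁻¹ S) + tr Γ - 2 tr S = tr ((S - Γ)ᵀ Γ⁻¹ (S - Γ)) ≥ 0`,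
with equality at `Γ = S`.
-/

namespace Matrix

variable {ι κ : Type*} [Fintype ι] [Fintype κ] [DecidableEq ι]

theorem PosSemidef.sqrt_mul_self {A : Matrix ι ι ℝ} (hA : A.PosSemidef) :
    hA.sqrt * hA.sqrt = A := by
  set U : Matrix ι ι ℝ := (hA.1.eigenvectorUnitary : Matrix ι ι ℝ) with hU
  set D : Matrix ι ι ℝ := diagonal ((↑) ∘ (√·) ∘ hA.1.eigenvalues)
  have hD : D * D = diagonal ((↑) ∘ hA.1.eigenvalues) := by
    simp [D, diagonal_mul_diagonal, Real.mul_self_sqrt (hA.eigenvalues_nonneg _)]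
  calc hA.sqrt * hA.sqrt = U * (D * (star U * U) * D) * star U := by
        simp only [PosSemidef.sqrt, U, D, Matrix.mul_assoc]
    _ = A := by
        rw [hU, Unitary.coe_star_mul_self, Matrix.mul_one, hD]
        exact hA.1.spectral_theorem.symm

theorem PosDef.posDef_sqrt {A : Matrix ι ι ℝ} (hA : A.PosDef) : hA.posSemidef.sqrt.PosDef :=
  (IsUnit.posDef_star_right_conjugate_iff (Unitary.isUnit_coe (U := hA.1.eigenvectorUnitary))).2 <|
    PosDef.diagonal fun i => by simpa using hA.eigenvalues_pos i

theorem trace_transpose_mul_mul_add_mul_trace {R : Type*} [CommRing R] (M : Matrix ι κ R)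
    (B : Matrix ι ι R) (μ : R) :
    (Mᵀ * B * M).trace + μ * B.trace = (B * (M * Mᵀ + μ • 1)).trace := by
  rw [Matrix.mul_add, trace_add, trace_mul_cycle, trace_mul_comm B, Matrix.mul_smul,
    Matrix.mul_one, trace_smul, smul_eq_mul]

theorem two_mul_trace_le_trace_mul_inv_mul_add_trace {S Γ : Matrix ι ι ℝ} (hS : S.IsHermitian)
    (hΓ : Γ.PosDef) : 2 * S.trace ≤ (S * Γ⁻¹ * S).trace + Γ.trace := by
  have hΓ_det : IsUnit Γ.det := hΓ.det_pos.ne'.isUnit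
  have hexpand : (S - Γ)ᴴ * Γ⁻¹ * (S - Γ) = S * Γ⁻¹ * S - 2 • S + Γ := by
    rw [conjTranspose_sub, hS.eq, hΓ.isHermitian.eq, Matrix.sub_mul, Matrix.sub_mul,
      Matrix.mul_sub, Matrix.mul_sub, Matrix.mul_assoc S Γ⁻¹ Γ, Matrix.mul_assoc Γ Γ⁻¹ Γ,
      nonsing_inv_mul Γ hΓ_det, mul_nonsing_inv Γ hΓ_det]
    noncomm_ring
  have hnonneg := (hΓ.inv.posSemidef.conjTranspose_mul_mul_same (S - Γ)).trace_nonneg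
  rw [hexpand, trace_add, trace_sub, trace_smul, nsmul_eq_mul, Nat.cast_ofNat] at hnonneg
  linarith

end Matrix

/-- The regularized form of the variational trace-norm formulation (Eq. (5) of the paper):
for a real `m × n` matrix `M` and `μ > 0`, the matrix `Γ* = (M Mᵀ + μ I) ^ (1/2)` is positive
definite, and for every positive definite `Γ`,
`tr (Mᵀ Γ⁻¹ M) + μ tr (Γ⁻¹) + tr Γ ≥ tr (Mᵀ (Γ*)⁻¹ M) + μ tr ((Γ*)⁻¹) + tr Γ*`,
the latter being equal to `2 tr ((M Mᵀ + μ I) ^ (1/2))`. -/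
theorem regularized_trace_norm_variational_attained
    {m n : ℕ} (M : Matrix (Fin m) (Fin n) ℝ) {μ : ℝ} (hμ : 0 < μ) :
    (posSemidef_self_mul_transpose_add_smul_one M hμ).sqrt.PosDef ∧
    (∀ Γ : Matrix (Fin m) (Fin m) ℝ, Γ.PosDef →
      (Mᵀ * Γ⁻¹ * M).trace + μ * (Γ⁻¹).trace + Γ.trace ≥
        (Mᵀ * ((posSemidef_self_mul_transpose_add_smul_one M hμ).sqrt)⁻¹ * M).trace
          + μ * (((posSemidef_self_mul_transpose_add_smul_one M hμ).sqrt)⁻¹).trace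
          + (posSemidef_self_mul_transpose_add_smul_one M hμ).sqrt.trace) ∧
    (Mᵀ * ((posSemidef_self_mul_transpose_add_smul_one M hμ).sqrt)⁻¹ * M).trace
        + μ * (((posSemidef_self_mul_transpose_add_smul_one M hμ).sqrt)⁻¹).trace
        + (posSemidef_self_mul_transpose_add_smul_one M hμ).sqrt.trace
      = 2 * (posSemidef_self_mul_transpose_add_smul_one M hμ).sqrt.trace := by
  set S := (posSemidef_self_mul_transpose_add_smul_one M hμ).sqrt
  have hA : (M * Mᵀ + μ • 1).PosDef :=
    PosDef.posSemidef_add (posSemidef_self_mul_transpose M) (PosDef.one.smul hμ)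
  have hS : S.PosDef := hA.posDef_sqrt
  have hSS : S * S = M * Mᵀ + μ • 1 := PosSemidef.sqrt_mul_self _
  have hobjective : ∀ Γ : Matrix (Fin m) (Fin m) ℝ,
      (Mᵀ * Γ⁻¹ * M).trace + μ * (Γ⁻¹).trace + Γ.trace = (S * Γ⁻¹ * S).trace + Γ.trace :=
    fun Γ => by
      rw [trace_transpose_mul_mul_add_mul_trace, ← hSS, ← Matrix.mul_assoc, trace_mul_cycle]
  have hattained : (S * S⁻¹ * S).trace + S.trace = 2 * S.trace := by
    rw [mul_nonsing_inv S hS.det_pos.ne'.isUnit, Matrix.one_mul, two_mul]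
  refine ⟨hS, fun Γ hΓ => ?_, (hobjective S).trans hattained⟩
  rw [hobjective, hobjective, hattained]
  exact two_mul_trace_le_trace_mul_inv_mul_add_trace hS.isHermitian hΓ
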